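/- For every γ > -1 with γ ≠ 0, the functionals F_{j,γ}(f) = ∫₀¹ t^γ(1-t)^γ f(t m_{j+1} + (1-t) m_{j+2}) dt (j = 1,2,3) together with the three edge averages form a unisolvent set of six degrees of freedom for polynomials of degree ≤ 2: any p ∈ ℙ₂ annihilated by all six functionals is zero. -/

import Mathlib

/-!
Along a segment from `b` to `a`, both families of functionals are quadrature rules that are exact
on quadratics: for `γ > -1` and `q` of degree `≤ 2`,
`∫₀¹ t^γ (1-t)^γ q(t) dt = B(γ+1, γ+1) / (2(2γ+3)) · (q(1) + q(0) + 4(γ+1) q(1/2))`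
(Simpson's rule for `γ = 0`). The six conditions therefore become linear relations between the
values of `p` at the vertices, at the edge midpoints and at the midpoints of the edges of the medial
triangle; the last ones are expressed through the others by quadratic Lagrange interpolation.
The resulting linear system has determinant a nonzero multiple of `γ² (7γ + 9)`, so for `γ ≠ 0`
the values of `p` at the six nodes of the quadratic Lagrange element vanish, and then so does `p`.
-/

open MeasureTheory

/-- Edge midpoints of the triangle. -/
noncomputable def midpt (v : Fin 3 → (Fin 2 → ℝ)) (j : Fin 3) : Fin 2 → ℝ :=
  (v (j + 1) + v (j + 2)) / 2

open ProbabilityTheory MvPolynomial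

theorem integral_rpow_mul_one_sub_rpow {a b : ℝ} (ha : -1 < a) (hb : -1 < b) :
    ∫ x in (0:ℝ)..1, x ^ a * (1 - x) ^ b = beta (a + 1) (b + 1) := by
  rw [beta_eq_betaIntegralReal _ _ (by linarith) (by linarith), Complex.betaIntegral]
  push_cast
  simp only [add_sub_cancel_right]
  rw [intervalIntegral.integral_congr (g := fun x : ℝ => ((x ^ a * (1 - x) ^ b : ℝ) : ℂ)),
    intervalIntegral.integral_ofReal, Complex.ofReal_re]
  intro x hx
  rw [Set.uIcc_of_le zero_le_one] at hx
  simp only [Complex.ofReal_mul, Complex.ofReal_cpow hx.1,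
    Complex.ofReal_cpow (sub_nonneg.2 hx.2), Complex.ofReal_sub, Complex.ofReal_one]

theorem mul_beta_add_one_add_one {a : ℝ} (ha : 0 < a) :
    2 * (2 * a + 1) * beta (a + 1) (a + 1) = a * beta a a := by
  have h2a : Real.Gamma (2 * a + 2) = (2 * a + 1) * (2 * a) * Real.Gamma (2 * a) := by
    rw [show 2 * a + 2 = (2 * a + 1) + 1 by ring, Real.Gamma_add_one (by positivity),
      Real.Gamma_add_one (by positivity)]
    ring
  have := Real.Gamma_pos_of_pos (show 0 < 2 * a by positivity)
  simp only [beta, show a + 1 + (a + 1) = 2 * a + 2 by ring, ← two_mul, h2a,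
    Real.Gamma_add_one ha.ne']
  field_simp

theorem integral_rpow_mul_one_sub_rpow_mul_two_mul_sub_one (γ : ℝ) :
    ∫ t in (0:ℝ)..1, t ^ γ * (1 - t) ^ γ * (2 * t - 1) = 0 := by
  have h := intervalIntegral.integral_comp_sub_left
    (fun t : ℝ => t ^ γ * (1 - t) ^ γ * (2 * t - 1)) (a := 0) (b := 1) 1
  simp only [sub_sub_cancel, sub_zero, sub_self] at h
  have h' : ∫ t in (0:ℝ)..1, (1 - t) ^ γ * t ^ γ * (2 * (1 - t) - 1)
      = -∫ t in (0:ℝ)..1, t ^ γ * (1 - t) ^ γ * (2 * t - 1) := by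
    rw [← intervalIntegral.integral_neg]
    exact intervalIntegral.integral_congr fun t _ => by ring
  linarith

theorem integral_rpow_mul_one_sub_rpow_mul_quadratic {γ : ℝ} (hγ : -1 < γ) (A B M : ℝ) :
    ∫ t in (0:ℝ)..1, t ^ γ * (1 - t) ^ γ *
        (t * (2 * t - 1) * A + (1 - t) * (1 - 2 * t) * B + 4 * t * (1 - t) * M)
      = beta (γ + 1) (γ + 1) / (2 * (2 * γ + 3)) * (A + B + 4 * (γ + 1) * M) := by
  set w : ℝ → ℝ := fun t => t ^ γ * (1 - t) ^ γ with hw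
  have hw_int : IntervalIntegrable w volume 0 1 := by
    refine intervalIntegral.intervalIntegrable_of_integral_ne_zero ?_
    rw [integral_rpow_mul_one_sub_rpow hγ hγ]
    exact (beta_pos (by linarith) (by linarith)).ne'
  have hw_odd_int : IntervalIntegrable (fun t => w t * (2 * t - 1)) volume 0 1 :=
    hw_int.mul_continuousOn (by fun_prop)
  have hw_mid_int : IntervalIntegrable (fun t => w t * (t * (1 - t))) volume 0 1 :=
    hw_int.mul_continuousOn (by fun_prop)
  have hw_mid : ∫ t in (0:ℝ)..1, w t * (t * (1 - t)) = beta (γ + 2) (γ + 2) := by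
    rw [show γ + 2 = γ + 1 + 1 by ring,
      ← integral_rpow_mul_one_sub_rpow (a := γ + 1) (b := γ + 1) (by linarith) (by linarith)]
    refine intervalIntegral.integral_congr fun t ht => ?_
    rw [Set.uIcc_of_le zero_le_one] at ht
    simp only [hw, Real.rpow_add_one' ht.1 (by linarith : γ + 1 ≠ 0),
      Real.rpow_add_one' (sub_nonneg.2 ht.2) (by linarith : γ + 1 ≠ 0)]
    ring
  have hrec := mul_beta_add_one_add_one (a := γ + 1) (by linarith)
  rw [show γ + 1 + 1 = γ + 2 by ring] at hrec
  calc ∫ t in (0:ℝ)..1, w t *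
        (t * (2 * t - 1) * A + (1 - t) * (1 - 2 * t) * B + 4 * t * (1 - t) * M)
      = ∫ t in (0:ℝ)..1, ((A + B) / 2 * w t + (A - B) / 2 * (w t * (2 * t - 1))
          + (4 * M - 2 * (A + B)) * (w t * (t * (1 - t)))) :=
        intervalIntegral.integral_congr fun t _ => by ring
    _ = (A + B) / 2 * beta (γ + 1) (γ + 1) + (4 * M - 2 * (A + B)) * beta (γ + 2) (γ + 2) := by
        rw [intervalIntegral.integral_add ((hw_int.const_mul _).add (hw_odd_int.const_mul _))
            (hw_mid_int.const_mul _),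
          intervalIntegral.integral_add (hw_int.const_mul _) (hw_odd_int.const_mul _),
          intervalIntegral.integral_const_mul, intervalIntegral.integral_const_mul,
          intervalIntegral.integral_const_mul, hw_mid, hw,
          integral_rpow_mul_one_sub_rpow hγ hγ,
          integral_rpow_mul_one_sub_rpow_mul_two_mul_sub_one]
        ring
    _ = _ := by
        have : 0 < 2 * γ + 3 := by linarith
        field_simp
        linear_combination (4 * M - 2 * (A + B)) * hrec

theorem exists_eval_eq_of_totalDegree_le_two {p : MvPolynomial (Fin 2) ℝ}
    (hp : p.totalDegree ≤ 2) :
    ∃ A B C D E F : ℝ, ∀ x : Fin 2 → ℝ,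
      eval x p = A + B * x 0 + C * x 1 + D * x 0 ^ 2 + E * x 0 * x 1 + F * x 1 ^ 2 := by
  rw [p.as_sum]
  refine Finset.sum_induction _ (fun q => ∃ A B C D E F : ℝ, ∀ x : Fin 2 → ℝ,
      eval x q = A + B * x 0 + C * x 1 + D * x 0 ^ 2 + E * x 0 * x 1 + F * x 1 ^ 2) ?_
    ⟨0, 0, 0, 0, 0, 0, fun x => by simp⟩ ?_
  · rintro q r ⟨A, B, C, D, E, F, hq⟩ ⟨A', B', C', D', E', F', hr⟩
    exact ⟨A + A', B + B', C + C', D + D', E + E', F + F', fun x => by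
      rw [map_add, hq, hr]; ring⟩
  · intro m hm
    have hdeg : m 0 + m 1 ≤ 2 := by
      have := (le_totalDegree hm).trans hp
      rwa [Finsupp.sum_fintype _ _ fun _ => rfl, Fin.sum_univ_two] at this
    simp only [eval_monomial, Finsupp.prod_fintype _ _ fun i => pow_zero _, Fin.prod_univ_two]
    set c := coeff m p
    obtain ⟨h0, h1⟩ | ⟨h0, h1⟩ | ⟨h0, h1⟩ | ⟨h0, h1⟩ | ⟨h0, h1⟩ | ⟨h0, h1⟩ :
        (m 0 = 0 ∧ m 1 = 0) ∨ (m 0 = 1 ∧ m 1 = 0) ∨ (m 0 = 0 ∧ m 1 = 1) ∨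
        (m 0 = 2 ∧ m 1 = 0) ∨ (m 0 = 1 ∧ m 1 = 1) ∨ (m 0 = 0 ∧ m 1 = 2) := by omega
    all_goals simp only [h0, h1]
    · exact ⟨c, 0, 0, 0, 0, 0, fun x => by ring⟩
    · exact ⟨0, c, 0, 0, 0, 0, fun x => by ring⟩
    · exact ⟨0, 0, c, 0, 0, 0, fun x => by ring⟩
    · exact ⟨0, 0, 0, c, 0, 0, fun x => by ring⟩
    · exact ⟨0, 0, 0, 0, c, 0, fun x => by ring⟩
    · exact ⟨0, 0, 0, 0, 0, c, fun x => by ring⟩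

theorem eval_smul_add_one_sub_smul {p : MvPolynomial (Fin 2) ℝ} (hp : p.totalDegree ≤ 2)
    (a b : Fin 2 → ℝ) (t : ℝ) :
    eval (t • a + (1 - t) • b) p = t * (2 * t - 1) * eval a p
      + (1 - t) * (1 - 2 * t) * eval b p + 4 * t * (1 - t) * eval ((a + b) / 2) p := by
  obtain ⟨A, B, C, D, E, F, h⟩ := exists_eval_eq_of_totalDegree_le_two hp
  simp only [h, Pi.add_apply, Pi.smul_apply, smul_eq_mul, Pi.div_apply, Pi.ofNat_apply]
  ring

theorem eval_midpoint_of_midpoints {p : MvPolynomial (Fin 2) ℝ} (hp : p.totalDegree ≤ 2)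
    (a b c : Fin 2 → ℝ) :
    8 * eval (((c + a) / 2 + (a + b) / 2) / 2) p = -(eval b p + eval c p)
      + 2 * eval ((b + c) / 2) p + 4 * (eval ((c + a) / 2) p + eval ((a + b) / 2) p) := by
  obtain ⟨A, B, C, D, E, F, h⟩ := exists_eval_eq_of_totalDegree_le_two hp
  simp only [h, Pi.add_apply, Pi.div_apply, Pi.ofNat_apply]
  ring

theorem eval_sum_smul_of_sum_eq_one {p : MvPolynomial (Fin 2) ℝ} (hp : p.totalDegree ≤ 2)
    (v : Fin 3 → Fin 2 → ℝ) (w : Fin 3 → ℝ) (hw : ∑ i, w i = 1) :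
    eval (∑ i, w i • v i) p = ∑ i, (w i * (2 * w i - 1) * eval (v i) p
      + 4 * w (i + 1) * w (i + 2) * eval (midpt v i) p) := by
  obtain ⟨A, B, C, D, E, F, h⟩ := exists_eval_eq_of_totalDegree_le_two hp
  rw [Fin.sum_univ_three] at hw
  simp only [h, Fin.sum_univ_three, midpt, Pi.add_apply, Pi.smul_apply, smul_eq_mul,
    Pi.div_apply, Pi.ofNat_apply, Fin.isValue, Fin.reduceAdd]
  rw [show w 2 = 1 - w 0 - w 1 by linarith]
  ring

theorem eq_zero_of_eval_vertex_of_eval_midpt {v : Fin 3 → Fin 2 → ℝ}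
    (hv : AffineIndependent ℝ v) {p : MvPolynomial (Fin 2) ℝ} (hp : p.totalDegree ≤ 2)
    (hvert : ∀ i, eval (v i) p = 0) (hmid : ∀ i, eval (midpt v i) p = 0) : p = 0 := by
  have hspan : affineSpan ℝ (Set.range v) = ⊤ :=
    hv.affineSpan_eq_top_iff_card_eq_finrank_add_one.2 (by simp)
  refine MvPolynomial.funext fun x => ?_
  obtain ⟨w, hw, rfl⟩ :=
    eq_affineCombination_of_mem_affineSpan_of_fintype (hspan ▸ AffineSubspace.mem_top ℝ _ x)
  rw [Finset.affineCombination_eq_linear_combination _ _ _ hw,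
    eval_sum_smul_of_sum_eq_one hp v w hw]
  simp [hvert, hmid]

theorem integral_rpow_mul_one_sub_rpow_mul_eval {p : MvPolynomial (Fin 2) ℝ}
    (hp : p.totalDegree ≤ 2) {γ : ℝ} (hγ : -1 < γ) (a b : Fin 2 → ℝ) :
    ∫ t in (0:ℝ)..1, t ^ γ * (1 - t) ^ γ * eval (t • a + (1 - t) • b) p
      = beta (γ + 1) (γ + 1) / (2 * (2 * γ + 3))
        * (eval a p + eval b p + 4 * (γ + 1) * eval ((a + b) / 2) p) := by
  simp_rw [eval_smul_add_one_sub_smul hp]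
  exact integral_rpow_mul_one_sub_rpow_mul_quadratic hγ _ _ _

theorem eval_add_eval_add_mul_eval_midpoint_eq_zero {p : MvPolynomial (Fin 2) ℝ}
    (hp : p.totalDegree ≤ 2) {γ : ℝ} (hγ : -1 < γ) {a b : Fin 2 → ℝ}
    (h : ∫ t in (0:ℝ)..1, t ^ γ * (1 - t) ^ γ * eval (t • a + (1 - t) • b) p = 0) :
    eval a p + eval b p + 4 * (γ + 1) * eval ((a + b) / 2) p = 0 := by
  rw [integral_rpow_mul_one_sub_rpow_mul_eval hp hγ] at h
  refine (mul_eq_zero.1 h).resolve_left (div_ne_zero ?_ (by linarith))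
  exact (beta_pos (by linarith) (by linarith)).ne'

theorem midpt_add_one (v : Fin 3 → Fin 2 → ℝ) (j : Fin 3) :
    midpt v (j + 1) = (v (j + 2) + v j) / 2 := by
  fin_cases j <;> rfl

theorem midpt_add_two (v : Fin 3 → Fin 2 → ℝ) (j : Fin 3) :
    midpt v (j + 2) = (v j + v (j + 1)) / 2 := by
  fin_cases j <;> rfl

/-- `P`, `M`, `N` stand for the values of `p` at the vertices, at the edge midpoints and at the
midpoints of the edges of the medial triangle. -/
theorem vertex_midpt_values_eq_zero {γ : ℝ} (hγ : -1 < γ) (hγ0 : γ ≠ 0) {P M N : Fin 3 → ℝ}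
    (hE : ∀ j, P (j + 1) + P (j + 2) + 4 * M j = 0)
    (hW : ∀ j, M (j + 1) + M (j + 2) + 4 * (γ + 1) * N j = 0)
    (hN : ∀ j, 8 * N j = -(P (j + 1) + P (j + 2)) + 2 * M j + 4 * (M (j + 1) + M (j + 2))) :
    (∀ j, P j = 0) ∧ ∀ j, M j = 0 := by
  have hM' : ∀ j, (2 * γ + 3) * (M (j + 1) + M (j + 2)) + 3 * (γ + 1) * M j = 0 := fun j => by
    linear_combination hW j - (γ + 1) / 2 * hN j + (γ + 1) / 2 * hE j
  have hE0 := hE 0; have hE1 := hE 1; have hE2 := hE 2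
  have hW0 := hM' 0; have hW1 := hM' 1; have hW2 := hM' 2
  simp only [Fin.isValue, Fin.reduceAdd] at hE0 hE1 hE2 hW0 hW1 hW2
  have hS : M 0 + M 1 + M 2 = 0 := by
    refine (mul_eq_zero.1 (?_ : (7 * γ + 9) * (M 0 + M 1 + M 2) = 0)).resolve_left (by linarith)
    linear_combination hW0 + hW1 + hW2
  have hM0 : γ * M 0 = 0 := by linear_combination hW0 - (2 * γ + 3) * hS
  have hM1 : γ * M 1 = 0 := by linear_combination hW1 - (2 * γ + 3) * hS
  have hM2 : γ * M 2 = 0 := by linear_combination hW2 - (2 * γ + 3) * hS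
  simp only [mul_eq_zero, hγ0, false_or] at hM0 hM1 hM2
  have hP0 : P 0 = 0 := by linarith
  have hP1 : P 1 = 0 := by linarith
  have hP2 : P 2 = 0 := by linarith
  refine ⟨fun j => ?_, fun j => ?_⟩ <;> fin_cases j <;> assumption

theorem first_class_unisolvence
    (v : Fin 3 → (Fin 2 → ℝ)) (hv : AffineIndependent ℝ v)
    (γ : ℝ) (hγ : -1 < γ) (hγ0 : γ ≠ 0)
    (p : MvPolynomial (Fin 2) ℝ) (hp : p.totalDegree ≤ 2)
    (hedge : ∀ j : Fin 3,
      (∫ t in (0:ℝ)..1,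
        MvPolynomial.eval (t • v (j + 1) + (1 - t) • v (j + 2)) p) = 0)
    (hF : ∀ j : Fin 3,
      (∫ t in (0:ℝ)..1, t ^ γ * (1 - t) ^ γ *
        MvPolynomial.eval (t • midpt v (j + 1) + (1 - t) • midpt v (j + 2)) p) = 0) :
    p = 0 := by
  have hE : ∀ j, eval (v (j + 1)) p + eval (v (j + 2)) p + 4 * eval (midpt v j) p = 0 := by
    intro j
    -- the edge averages are the weighted functionals with exponent `0`
    have h := eval_add_eval_add_mul_eval_midpoint_eq_zero hp neg_one_lt_zero
      (by simpa using hedge j)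
    rwa [zero_add, mul_one] at h
  have hN : ∀ j, 8 * eval ((midpt v (j + 1) + midpt v (j + 2)) / 2) p
      = -(eval (v (j + 1)) p + eval (v (j + 2)) p) + 2 * eval (midpt v j) p
        + 4 * (eval (midpt v (j + 1)) p + eval (midpt v (j + 2)) p) := by
    intro j
    rw [midpt_add_one, midpt_add_two]
    exact eval_midpoint_of_midpoints hp (v j) (v (j + 1)) (v (j + 2))
  obtain ⟨hvert, hmid⟩ := vertex_midpt_values_eq_zero hγ hγ0 (P := fun i => eval (v i) p)
    (M := fun i => eval (midpt v i) p) hE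
    (fun j => eval_add_eval_add_mul_eval_midpoint_eq_zero hp hγ (hF j)) hN
  exact eq_zero_of_eval_vertex_of_eval_midpt hv hp hvert hmid
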